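/- Let A be a bounded linear operator on a complex Hilbert space H and let α ∈ [0,1]. Then w(A)² ≤ (1/4)‖ |A|^{4α} + |A*|^{4(1−α)} ‖ + (1/2) w( |A*|^{2(1−α)} |A|^{2α} ). -/

import Mathlib

/-!
Write `S = A^*A`, `R = AA^*`, `B = |A|^{2α} = S^α` and `C = |A^*|^{2(1-α)} = R^{1-α}`. The proof rests
on Kato's mixed Schwarz inequality `|⟨Ax, y⟩|² ≤ ⟨Bx, x⟩⟨Cy, y⟩`. For a unit vector `x`, Buzano's
inequality `|⟨u, x⟩⟨x, v⟩| ≤ (‖u‖‖v‖ + |⟨u, v⟩|)/2` with `u = Bx`, `v = Cx`, followed by AM–GM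
`‖Bx‖‖Cx‖ ≤ ⟨(B² + C²)x, x⟩/2` and `⟨Bx, Cx⟩ = ⟨CBx, x⟩`, turns this into
`|⟨Ax, x⟩|² ≤ ‖B² + C²‖/4 + w(CB)/2`.

Mixed Schwarz is proved without polar decomposition. For `ε > 0` the operator `S + ε` is
invertible, so `⟨Ax, y⟩ = ⟨(S + ε)^{α/2} x, (S + ε)^{-α/2} A^* y⟩`. The intertwining relation
`A f(S) = f(R) A`, obtained from polynomials by Weierstrass approximation, gives
`‖(S + ε)^{-α/2} A^* y‖² = ⟨(R + ε)^{-α} R y, y⟩ ≤ ⟨R^{1-α} y, y⟩`, while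
`(S + ε)^α ≤ S^α + ε^α`; then let `ε → 0`.
-/

open ContinuousLinearMap Complex

variable {H : Type*} [NormedAddCommGroup H] [InnerProductSpace ℂ H] [CompleteSpace H]

noncomputable def nrad (A : H →L[ℂ] H) : ℝ :=
  ⨆ x : {x : H // ‖x‖ = 1}, ‖(inner ℂ (A x) (x : H) : ℂ)‖

noncomputable def reP (A : H →L[ℂ] H) : H →L[ℂ] H := (2 : ℂ)⁻¹ • (A + adjoint A)
noncomputable def imP (A : H →L[ℂ] H) : H →L[ℂ] H := (2 * Complex.I)⁻¹ • (A - adjoint A)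

noncomputable def oabs (A : H →L[ℂ] H) : H →L[ℂ] H := cfc Real.sqrt (adjoint A * A)

noncomputable def opow (T : H →L[ℂ] H) (r : ℝ) : H →L[ℂ] H := cfc (fun t : ℝ => t ^ r) T

open Filter Topology Polynomial
open scoped InnerProductSpace

theorem Real.add_rpow_neg_mul_le_rpow_one_sub {t ε α : ℝ} (ht : 0 ≤ t) (hε : 0 ≤ ε)
    (hα : 0 ≤ α) : (t + ε) ^ (-α) * t ≤ t ^ (1 - α) := by
  rcases ht.eq_or_lt with rfl | ht
  · simpa using Real.rpow_nonneg le_rfl (1 - α)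
  calc (t + ε) ^ (-α) * t ≤ t ^ (-α) * t :=
        mul_le_mul_of_nonneg_right (Real.rpow_le_rpow_of_nonpos ht (by linarith) (by linarith))
          ht.le
    _ = t ^ (1 - α) := by
        rw [sub_eq_neg_add, Real.rpow_add ht, Real.rpow_one]

theorem le_mul_of_forall_pos_le_add_rpow_mul {a b c d α : ℝ} (hα : 0 < α)
    (h : ∀ ε > 0, c ≤ (a + ε ^ α * b) * d) : c ≤ a * d := by
  have hlim : Tendsto (fun ε : ℝ => (a + ε ^ α * b) * d) (𝓝[>] 0) (𝓝 ((a + 0 ^ α * b) * d)) :=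
    (((Real.continuous_rpow_const hα.le).mul continuous_const).const_add a |>.mul_const d
      |>.tendsto 0).mono_left nhdsWithin_le_nhds
  rw [Real.zero_rpow hα.ne', zero_mul, add_zero] at hlim
  exact ge_of_tendsto hlim (eventually_nhdsWithin_of_forall h)

theorem continuousOn_add_const_rpow_Ici {ε : ℝ} (hε : 0 < ε) (β : ℝ) :
    ContinuousOn (fun t : ℝ => (t + ε) ^ β) (Set.Ici 0) :=
  (continuousOn_id.add continuousOn_const).rpow_const fun t (ht : 0 ≤ t) =>
    Or.inl (by linarith : 0 < t + ε).ne'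

theorem SemiconjBy.aeval {R A : Type*} [CommSemiring R] [Semiring A] [Algebra R A]
    {x a b : A} (h : SemiconjBy x a b) (p : R[X]) :
    SemiconjBy x (aeval a p) (aeval b p) := by
  induction p using Polynomial.induction_on' with
  | add p q hp hq => simpa only [map_add] using hp.add_right hq
  | monomial n c => simpa only [aeval_monomial] using
      SemiconjBy.mul_right (Algebra.commute_algebraMap_right c x) (h.pow_right n)

section CStarAlgebra

variable {A : Type*} [CStarAlgebra A] [PartialOrder A] [StarOrderedRing A]

theorem SemiconjBy.cfc_of_nonneg {x a b : A} (h : SemiconjBy x a b) (ha : 0 ≤ a) (hb : 0 ≤ b)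
    {f : ℝ → ℝ} (hf : ContinuousOn f (Set.Ici 0)) : SemiconjBy x (cfc f a) (cfc f b) := by
  obtain ⟨M, hM⟩ := ((spectrum.isCompact (𝕜 := ℝ) a).union (spectrum.isCompact b)).bddAbove
  have hspec : ∀ c : A, 0 ≤ c → spectrum ℝ c ⊆ spectrum ℝ a ∪ spectrum ℝ b →
      spectrum ℝ c ⊆ Set.Icc 0 M := fun c hc hsub t ht =>
    ⟨spectrum_nonneg_of_nonneg hc ht, hM (hsub ht)⟩
  choose p hp using fun n : ℕ => exists_polynomial_near_of_continuousOn 0 M f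
    (hf.mono Set.Icc_subset_Ici_self) (1 / (n + 1)) Nat.one_div_pos_of_nat
  have hunif : TendstoUniformlyOn (fun n => (p n).eval) f atTop (Set.Icc 0 M) := by
    refine Metric.tendstoUniformlyOn_iff.2 fun ε hε => ?_
    obtain ⟨N, hN⟩ := exists_nat_one_div_lt hε
    filter_upwards [eventually_ge_atTop N] with n hn t ht
    rw [dist_comm, Real.dist_eq]
    refine (hp n t ht).trans_le (hN.le.trans' ?_)
    gcongr
  have hlim : ∀ c : A, 0 ≤ c → spectrum ℝ c ⊆ spectrum ℝ a ∪ spectrum ℝ b →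
      Tendsto (fun n => cfc (p n).eval c) atTop (𝓝 (cfc f c)) := fun c hc hsub =>
    tendsto_cfc_fun (hunif.mono (hspec c hc hsub))
      (.of_forall fun n => (p n).continuous.continuousOn)
  refine tendsto_nhds_unique (((hlim a ha Set.subset_union_left).const_mul x).congr fun n => ?_)
    ((hlim b hb Set.subset_union_right).mul_const x)
  rw [cfc_polynomial (p n) a ha.isSelfAdjoint, cfc_polynomial (p n) b hb.isSelfAdjoint]
  exact h.aeval (p n)

theorem CFC.rpow_two_mul {a : A} (ha : 0 ≤ a) {r : ℝ} (hr : 0 ≤ r) :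
    a ^ (2 * r) = a ^ r * a ^ r := by
  rw [mul_comm, ← CFC.rpow_rpow_of_exponent_nonneg a r 2 hr zero_le_two,
    ← Nat.cast_ofNat, CFC.rpow_natCast _ 2, sq]

theorem cfc_add_const_rpow_le {a : A} (ha : 0 ≤ a) {α ε : ℝ} (h0 : 0 ≤ α) (h1 : α ≤ 1)
    (hε : 0 ≤ ε) : cfc (fun t : ℝ => (t + ε) ^ α) a ≤ a ^ α + algebraMap ℝ A (ε ^ α) := by
  have hpow := Real.continuous_rpow_const h0
  rw [CFC.rpow_eq_cfc_real ha, ← cfc_add_const (ε ^ α) _ a hpow.continuousOn ha.isSelfAdjoint]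
  exact cfc_mono
    (fun t ht => Real.rpow_add_le_add_rpow (spectrum_nonneg_of_nonneg ha ht) hε h0 h1)
    (hpow.comp (continuous_add_const ε)).continuousOn (hpow.add continuous_const).continuousOn

theorem mul_cfc_star_mul_self_mul_star_le (a : A) {α ε : ℝ} (h0 : 0 ≤ α) (h1 : α ≤ 1)
    (hε : 0 < ε) :
    a * cfc (fun t : ℝ => (t + ε) ^ (-α)) (star a * a) * star a ≤ (a * star a) ^ (1 - α) := by
  have hcont := continuousOn_add_const_rpow_Ici hε (-α)
  have hR := mul_star_self_nonneg a
  have hspec : spectrum ℝ (a * star a) ⊆ Set.Ici 0 := fun t ht => spectrum_nonneg_of_nonneg hR ht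
  have hsemi : SemiconjBy a (star a * a) (a * star a) := (mul_assoc _ _ _).symm
  rw [(hsemi.cfc_of_nonneg (star_mul_self_nonneg a) hR hcont).eq, mul_assoc,
    CFC.rpow_eq_cfc_real hR]
  nth_rewrite 2 [← cfc_id' ℝ (a * star a)]
  rw [← cfc_mul _ _ _ (hcont.mono hspec)]
  exact cfc_mono (fun t ht => Real.add_rpow_neg_mul_le_rpow_one_sub (hspec ht) hε.le h0)
    ((hcont.mono hspec).mul continuousOn_id)
    (Real.continuous_rpow_const (by linarith)).continuousOn

end CStarAlgebra

section InnerProductSpace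

variable {E : Type*} [NormedAddCommGroup E] [InnerProductSpace ℂ E]

theorem norm_inner_mul_inner_le {x : E} (hx : ‖x‖ = 1) (u v : E) :
    ‖⟪u, x⟫_ℂ * ⟪x, v⟫_ℂ‖ ≤ (‖u‖ * ‖v‖ + ‖⟪u, v⟫_ℂ‖) / 2 := by
  set c := ⟪x, v⟫_ℂ
  -- `2 c x - v` is the reflection of `v` in the line through `x`, so it has the norm of `v`.
  have hreflect : ‖(2 * c) • x - v‖ = ‖v‖ := by
    refine (sq_eq_sq₀ (norm_nonneg _) (norm_nonneg _)).1 ?_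
    rw [@norm_sub_sq ℂ, inner_smul_left, map_mul (starRingEnd ℂ), mul_assoc, Complex.conj_mul',
      norm_smul, hx, norm_mul]
    norm_num [← Complex.ofReal_pow]
    ring
  have hcs := norm_inner_le_norm (𝕜 := ℂ) u ((2 * c) • x - v)
  rw [hreflect, inner_sub_right, inner_smul_right] at hcs
  have htri := norm_sub_norm_le (2 * c * ⟪u, x⟫_ℂ) ⟪u, v⟫_ℂ
  have htwo : ‖2 * c * ⟪u, x⟫_ℂ‖ = 2 * ‖⟪u, x⟫_ℂ * c‖ := by
    simp only [norm_mul, Complex.norm_two]; ring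
  linarith

theorem nrad_nonneg (T : E →L[ℂ] E) : 0 ≤ nrad T :=
  Real.iSup_nonneg fun _ => norm_nonneg _

theorem norm_inner_le_nrad (T : E →L[ℂ] E) {x : E} (hx : ‖x‖ = 1) :
    ‖⟪T x, x⟫_ℂ‖ ≤ nrad T := by
  refine le_ciSup (f := fun y : {y : E // ‖y‖ = 1} => ‖⟪T y, (y : E)⟫_ℂ‖) ⟨‖T‖, ?_⟩ ⟨x, hx⟩
  rintro _ ⟨⟨y, hy⟩, rfl⟩
  simpa [hy] using (norm_inner_le_norm (𝕜 := ℂ) (T y) y).trans (by simpa [hy] using T.le_opNorm y)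

theorem nrad_le (T : E →L[ℂ] E) {c : ℝ} (hc : 0 ≤ c) (h : ∀ x : E, ‖x‖ = 1 → ‖⟪T x, x⟫_ℂ‖ ≤ c) :
    nrad T ≤ c :=
  Real.iSup_le (fun x => h x x.2) hc

theorem re_inner_le_re_inner_of_le {S T : E →L[ℂ] E} (h : S ≤ T) (x : E) :
    re ⟪S x, x⟫_ℂ ≤ re ⟪T x, x⟫_ℂ := by
  have := h.re_inner_nonneg_left x
  rw [sub_apply, inner_sub_left, map_sub, sub_nonneg] at this
  exact this

end InnerProductSpace

theorem re_inner_mul_re_inner_le {B C : H →L[ℂ] H} (hB : IsSelfAdjoint B) (hC : IsSelfAdjoint C)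
    {x : H} (hx : ‖x‖ = 1) :
    re ⟪B x, x⟫_ℂ * re ⟪C x, x⟫_ℂ ≤ ‖B * B + C * C‖ / 4 + ‖⟪(C * B) x, x⟫_ℂ‖ / 2 := by
  have hre : re ⟪B x, x⟫_ℂ * re ⟪C x, x⟫_ℂ ≤ ‖⟪B x, x⟫_ℂ * ⟪x, C x⟫_ℂ‖ := by
    rw [← inner_conj_symm x, norm_mul, Complex.norm_conj]
    refine (le_abs_self _).trans ?_
    rw [abs_mul]
    gcongr <;> exact Complex.abs_re_le_norm _
  have hsq : ‖B x‖ ^ 2 + ‖C x‖ ^ 2 = re ⟪(B * B + C * C) x, x⟫_ℂ := by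
    rw [add_apply, inner_add_left, Complex.add_re, apply_norm_sq_eq_inner_adjoint_left,
      apply_norm_sq_eq_inner_adjoint_left, hB.adjoint_eq, hC.adjoint_eq]
    rfl
  have hnorm : re ⟪(B * B + C * C) x, x⟫_ℂ ≤ ‖B * B + C * C‖ :=
    calc re ⟪(B * B + C * C) x, x⟫_ℂ ≤ ‖(B * B + C * C) x‖ * ‖x‖ :=
          (Complex.re_le_norm _).trans (norm_inner_le_norm _ _)
      _ ≤ ‖B * B + C * C‖ := by simpa [hx] using (B * B + C * C).le_opNorm x
  have hcross : ⟪(C * B) x, x⟫_ℂ = ⟪B x, C x⟫_ℂ := hC.isSymmetric (B x) x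
  have := norm_inner_mul_inner_le hx (B x) (C x)
  rw [hcross]
  nlinarith [sq_nonneg (‖B x‖ - ‖C x‖)]

theorem nrad_sq_le_of_forall_norm_inner_sq_le (A : H →L[ℂ] H) {B C : H →L[ℂ] H}
    (hB : IsSelfAdjoint B) (hC : IsSelfAdjoint C)
    (h : ∀ x : H, ‖x‖ = 1 → ‖⟪A x, x⟫_ℂ‖ ^ 2 ≤ re ⟪B x, x⟫_ℂ * re ⟪C x, x⟫_ℂ) :
    nrad A ^ 2 ≤ 1 / 4 * ‖B * B + C * C‖ + 1 / 2 * nrad (C * B) := by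
  have hK : 0 ≤ 1 / 4 * ‖B * B + C * C‖ + 1 / 2 * nrad (C * B) := by
    have := nrad_nonneg (C * B); positivity
  refine (Real.le_sqrt (nrad_nonneg A) hK).1 (nrad_le A (Real.sqrt_nonneg _) fun x hx => ?_)
  refine (Real.le_sqrt (norm_nonneg _) hK).2 ((h x hx).trans ?_)
  linarith [re_inner_mul_re_inner_le hB hC hx, norm_inner_le_nrad (C * B) hx]

theorem norm_cfc_add_const_rpow_half_apply_sq {S : H →L[ℂ] H} (hS : 0 ≤ S) {ε : ℝ} (hε : 0 < ε)
    (β : ℝ) (x : H) :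
    ‖cfc (fun t : ℝ => (t + ε) ^ (β / 2)) S x‖ ^ 2 =
      re ⟪cfc (fun t : ℝ => (t + ε) ^ β) S x, x⟫_ℂ := by
  have hspec : spectrum ℝ S ⊆ Set.Ici 0 := fun t ht => spectrum_nonneg_of_nonneg hS ht
  have hf := (continuousOn_add_const_rpow_Ici hε (β / 2)).mono hspec
  have hsq : cfc (fun t : ℝ => (t + ε) ^ (β / 2)) S * cfc (fun t : ℝ => (t + ε) ^ (β / 2)) S =
      cfc (fun t : ℝ => (t + ε) ^ β) S := by
    rw [← cfc_mul _ _ S hf hf]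
    refine cfc_congr fun t ht => ?_
    rw [← Real.rpow_add (by linarith [show 0 ≤ t from hspec ht]), add_halves]
  rw [apply_norm_sq_eq_inner_adjoint_left, (cfc_predicate _ S : IsSelfAdjoint _).adjoint_eq, ← hsq]
  rfl

theorem norm_inner_le_of_mul_eq_one (A : H →L[ℂ] H) {P Q : H →L[ℂ] H} (hQ : IsSelfAdjoint Q)
    (hQP : Q * P = 1) (x y : H) : ‖⟪A x, y⟫_ℂ‖ ≤ ‖P x‖ * ‖Q (adjoint A y)‖ := by
  have hx : Q (P x) = x := congrArg (· x) hQP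
  calc ‖⟪A x, y⟫_ℂ‖ = ‖⟪A (Q (P x)), y⟫_ℂ‖ := by rw [hx]
    _ = ‖⟪P x, Q (adjoint A y)⟫_ℂ‖ := by
        rw [← adjoint_inner_right]; exact congrArg _ (hQ.isSymmetric _ _)
    _ ≤ ‖P x‖ * ‖Q (adjoint A y)‖ := norm_inner_le_norm _ _

theorem norm_inner_sq_le_mixed_schwarz_eps (A : H →L[ℂ] H) {α ε : ℝ} (h0 : 0 ≤ α) (h1 : α ≤ 1)
    (hε : 0 < ε) (x y : H) :
    ‖⟪A x, y⟫_ℂ‖ ^ 2 ≤ (re ⟪((adjoint A * A) ^ α) x, x⟫_ℂ + ε ^ α * ‖x‖ ^ 2) *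
      re ⟪((A * adjoint A) ^ (1 - α)) y, y⟫_ℂ := by
  set S := adjoint A * A
  have hS : 0 ≤ S := star_mul_self_nonneg A
  set P := cfc (fun t : ℝ => (t + ε) ^ (α / 2)) S
  set Q := cfc (fun t : ℝ => (t + ε) ^ (-α / 2)) S
  have hspec : spectrum ℝ S ⊆ Set.Ici 0 := fun t ht => spectrum_nonneg_of_nonneg hS ht
  have hQP : Q * P = 1 := by
    rw [← cfc_mul _ _ S ((continuousOn_add_const_rpow_Ici hε _).mono hspec)
      ((continuousOn_add_const_rpow_Ici hε _).mono hspec), ← cfc_const_one ℝ S]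
    refine cfc_congr fun t ht => ?_
    rw [← Real.rpow_add (by linarith [show 0 ≤ t from hspec ht]), neg_div, neg_add_cancel,
      Real.rpow_zero]
  have hP : ‖P x‖ ^ 2 ≤ re ⟪(S ^ α) x, x⟫_ℂ + ε ^ α * ‖x‖ ^ 2 := by
    rw [norm_cfc_add_const_rpow_half_apply_sq hS hε]
    refine (re_inner_le_re_inner_of_le (cfc_add_const_rpow_le hS h0 h1 hε.le) x).trans_eq ?_
    simp [Algebra.algebraMap_eq_smul_one, ← inner_self_eq_norm_sq (𝕜 := ℂ)]
  have hQ : ‖Q (adjoint A y)‖ ^ 2 ≤ re ⟪((A * adjoint A) ^ (1 - α)) y, y⟫_ℂ := by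
    rw [norm_cfc_add_const_rpow_half_apply_sq hS hε, adjoint_inner_right]
    exact re_inner_le_re_inner_of_le (mul_cfc_star_mul_self_mul_star_le A h0 h1 hε) y
  calc ‖⟪A x, y⟫_ℂ‖ ^ 2 ≤ (‖P x‖ * ‖Q (adjoint A y)‖) ^ 2 := by
        gcongr; exact norm_inner_le_of_mul_eq_one A (cfc_predicate _ S) hQP x y
    _ = ‖P x‖ ^ 2 * ‖Q (adjoint A y)‖ ^ 2 := mul_pow _ _ 2
    _ ≤ _ := mul_le_mul hP hQ (sq_nonneg _) ((sq_nonneg _).trans hP)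

theorem norm_inner_sq_le_mixed_schwarz (A : H →L[ℂ] H) {α : ℝ} (h0 : 0 ≤ α) (h1 : α ≤ 1)
    (x y : H) :
    ‖⟪A x, y⟫_ℂ‖ ^ 2 ≤
      re ⟪((adjoint A * A) ^ α) x, x⟫_ℂ * re ⟪((A * adjoint A) ^ (1 - α)) y, y⟫_ℂ := by
  have hS : 0 ≤ adjoint A * A := star_mul_self_nonneg A
  have hR : 0 ≤ A * adjoint A := mul_star_self_nonneg A
  rcases h0.eq_or_lt with rfl | h0
  -- The `ε`-bound is useless at `α = 0` (`ε ^ 0 = 1`); there the claim is Cauchy–Schwarz.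
  · have hx : re ⟪x, x⟫_ℂ = ‖x‖ ^ 2 := inner_self_eq_norm_sq (𝕜 := ℂ) x
    have hy : re ⟪(A * adjoint A) y, y⟫_ℂ = ‖adjoint A y‖ ^ 2 := by
      rw [apply_norm_sq_eq_inner_adjoint_left, adjoint_adjoint]; rfl
    rw [CFC.rpow_zero _ hS, sub_zero, CFC.rpow_one _ hR, one_apply_eq_self, hx, hy, ← mul_pow,
      ← adjoint_inner_right]
    gcongr
    exact norm_inner_le_norm _ _
  · exact le_mul_of_forall_pos_le_add_rpow_mul h0 fun ε hε =>
      norm_inner_sq_le_mixed_schwarz_eps A h0.le h1 hε x y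

theorem opow_oabs_two_mul (A : H →L[ℂ] H) {r : ℝ} (hr : 0 ≤ r) :
    opow (oabs A) (2 * r) = (adjoint A * A) ^ r := by
  have hS : 0 ≤ adjoint A * A := star_mul_self_nonneg A
  rw [opow, oabs, ← cfcₙ_eq_cfc (f := Real.sqrt), ← CFC.sqrt_eq_real_sqrt _ hS,
    ← CFC.rpow_eq_cfc_real (CFC.sqrt_nonneg _), CFC.sqrt_eq_rpow,
    CFC.rpow_rpow_of_exponent_nonneg _ _ _ (by norm_num) (by positivity) hS]
  congr 1
  ring

theorem stmt8 (A : H →L[ℂ] H) (α : ℝ) (hα : α ∈ Set.Icc (0:ℝ) 1) :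
    (nrad A) ^ 2
      ≤ (1/4) * ‖opow (oabs A) (4 * α) + opow (oabs (adjoint A)) (4 * (1 - α))‖
        + (1/2) * nrad (opow (oabs (adjoint A)) (2 * (1 - α)) * opow (oabs A) (2 * α)) := by
  obtain ⟨h0, h1⟩ := hα
  have hS : 0 ≤ adjoint A * A := star_mul_self_nonneg A
  have hR : 0 ≤ A * adjoint A := mul_star_self_nonneg A
  rw [show 4 * α = 2 * (2 * α) by ring, show 4 * (1 - α) = 2 * (2 * (1 - α)) by ring,
    opow_oabs_two_mul A (by positivity), opow_oabs_two_mul A h0,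
    opow_oabs_two_mul (adjoint A) (by linarith), opow_oabs_two_mul (adjoint A) (by linarith),
    adjoint_adjoint, CFC.rpow_two_mul hS h0, CFC.rpow_two_mul hR (by linarith)]
  exact nrad_sq_le_of_forall_norm_inner_sq_le A CFC.rpow_nonneg.isSelfAdjoint
    CFC.rpow_nonneg.isSelfAdjoint fun x _ => norm_inner_sq_le_mixed_schwarz A h0 h1 x x
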